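/- Assume L ∈ ℝ^{n×n} satisfies L𝟙 = 0, 𝟙ᵀL = 0, ker L = span{𝟙}, and σ = ‖I − Π − L‖ < 1; let 0 < μ ≤ L_f and let g_1, …, g_n : ℝ → ℝ satisfy the sector bound on (μ, L_f) about x_opt with Σᵢ g_i(x_opt) = 0; let α ≠ 0, ζ ≠ 0, η ≠ 0, δ ∈ ℝ. Define A_p = [[1,0],[0,0]], B_pu = (−α,0)ᵀ, A_q = [[1,0],[1,1]], B_qu = (−α,0)ᵀ, B_qv = (−ζ,−1)ᵀ, C_x = (1,0), D_xu = 0, D_xv = −1, C_y = (δ,η), M_0 = [[−2μL_f, L_f+μ],[L_f+μ, −2]], M_1 = [[σ²−1, 1],[1, −1]]. Suppose there exist symmetric positive definite P, Q ∈ ℝ^{2×2}, λ_0, λ_1 ≥ 0, and ρ ∈ (0,1) such that (i) [A_p B_pu; I₂ 0]ᵀ·blkdiag(P, −ρ²P)·[A_p B_pu; I₂ 0] + λ_0·[C_x D_xu; 0 1]ᵀ M_0 [C_x D_xu; 0 1] ⪯ 0, and (ii) [A_q B_qu B_qv; I₂ 0 0]ᵀ·blkdiag(Q, −ρ²Q)·[A_q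 B_qu B_qv; I₂ 0 0] + λ_0·[C_x D_xu D_xv; 0 1 0]ᵀ M_0 [C_x D_xu D_xv; 0 1 0] + λ_1·[C_y 0 0; 0 0 1]ᵀ M_1 [C_y 0 0; 0 0 1] ⪯ 0. Then, letting (w1*, ŵ2*) be the unique fixed point of G_m and T = P ⊗ Π + Q ⊗ (I − Π), every trajectory (w1^k, ŵ2^k) of G_m satisfies, for all k ≥ 0, ‖w1^k − w1*‖² + ‖ŵ2^k − ŵ2*‖² ≤ cond(T)·ρ^{2k}·(‖w1^0 − w1*‖² + ‖ŵ2^0 − ŵ2*‖²), where cond(T) = λ_max(T)/λ_min(T). -/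

import Mathlib

open Matrix Kronecker

/-- The ℓ² operator (spectral) norm of a real square matrix. -/
noncomputable def matSpectralNorm {n : ℕ} (M : Matrix (Fin n) (Fin n) ℝ) : ℝ :=
  ‖Matrix.toEuclideanCLM (𝕜 := ℝ) M‖

/-- The all-ones vector 𝟙 ∈ ℝⁿ. -/
def onesVec (n : ℕ) : Fin n → ℝ := fun _ => 1

/-- The projection Π = (1/n)𝟙𝟙ᵀ onto the consensus subspace. -/
noncomputable def consensusProj (n : ℕ) : Matrix (Fin n) (Fin n) ℝ :=
  Matrix.of fun _ _ => (n : ℝ)⁻¹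

/-- The sector-IQC matrix `M₀ = [[−2μL_f, L_f+μ],[L_f+μ, −2]]` (indexed by `Fin 1 ⊕ Fin 1`). -/
noncomputable def M0mat (μ Lf : ℝ) : Matrix (Fin 1 ⊕ Fin 1) (Fin 1 ⊕ Fin 1) ℝ :=
  fromBlocks !![-2 * μ * Lf] !![Lf + μ] !![Lf + μ] !![-2]

/-- The graph-IQC matrix `M₁ = [[σ²−1, 1],[1, −1]]` (indexed by `Fin 1 ⊕ Fin 1`). -/
noncomputable def M1mat (σ : ℝ) : Matrix (Fin 1 ⊕ Fin 1) (Fin 1 ⊕ Fin 1) ℝ :=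
  fromBlocks !![σ ^ 2 - 1] !![1] !![1] !![-1]

/-- `blkdiag(P, −ρ²P)`. -/
noncomputable def blkDiagRho {d : ℕ} (P : Matrix (Fin d) (Fin d) ℝ) (ρ : ℝ) :
    Matrix (Fin d ⊕ Fin d) (Fin d ⊕ Fin d) ℝ :=
  fromBlocks P 0 0 ((-(ρ ^ 2)) • P)


/-- `[A_p B_pu; I 0]` for the consensus-direction LMI. -/
noncomputable def Xp (α : ℝ) : Matrix (Fin 2 ⊕ Fin 2) (Fin 2 ⊕ Fin 1) ℝ :=
  fromBlocks !![(1 : ℝ), 0; 0, 0] !![-α; 0] 1 0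

/-- `[C_x D_xu; 0 1]` for the consensus-direction LMI. -/
noncomputable def Yp : Matrix (Fin 1 ⊕ Fin 1) (Fin 2 ⊕ Fin 1) ℝ :=
  fromBlocks !![(1 : ℝ), 0] !![(0 : ℝ)] 0 1

/-- `[A_q B_qu B_qv; I 0 0]` for the disagreement-direction LMI. -/
noncomputable def Xq (α ζ : ℝ) : Matrix (Fin 2 ⊕ Fin 2) (Fin 2 ⊕ (Fin 1 ⊕ Fin 1)) ℝ :=
  fromBlocks !![(1 : ℝ), 0; 1, 1] (fromCols !![-α; 0] !![-ζ; -1]) 1 0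

/-- `[C_x D_xu D_xv; 0 1 0]` for the disagreement-direction LMI. -/
noncomputable def Yqx : Matrix (Fin 1 ⊕ Fin 1) (Fin 2 ⊕ (Fin 1 ⊕ Fin 1)) ℝ :=
  fromBlocks !![(1 : ℝ), 0] (fromCols !![(0 : ℝ)] !![(-1 : ℝ)]) 0 (fromCols 1 0)

/-- `[C_y 0 0; 0 0 1]` for the disagreement-direction LMI. -/
noncomputable def Yqy (δ η : ℝ) : Matrix (Fin 1 ⊕ Fin 1) (Fin 2 ⊕ (Fin 1 ⊕ Fin 1)) ℝ :=
  fromBlocks !![δ, η] 0 0 (fromCols 0 1)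

/-!
Let `z` be the error `(w1ᵏ - w1*, ŵ2ᵏ - ŵ2*)` and split each block of `z` into its mean
(consensus part) and its deviations from the mean (disagreement part); in these coordinates
`V = zᵀ T z = n q_P(means) + Σᵢ q_Q(deviationsᵢ)`. By the `ŵ2` equation `x*` is constant, and
summing the sector bounds there gives `-2 μ L_f n (c - x_opt)² ≥ 0`, so `x* = x_opt 𝟙` and the
errors obey the sector bound. LMI (i) at the means and LMI (ii) at every deviation row bound
`V(z⁺) - ρ² V(z)` by minus the multiplier terms, which are nonnegative: the sector terms recombine
into the sector inequality of the whole error, and the graph terms sum to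
`σ² ‖ŷ‖² - ‖ŷ - v‖² ≥ 0` since `ŷ - v = (I - Π - L) ŷ`. Hence `V` contracts by `ρ²` per step,
and comparing `V` with `‖z‖²` through the extreme eigenvalues of `T` gives the bound.
-/

namespace Matrix

theorem dotProduct_kronecker_mulVec {R ι κ : Type*} [CommSemiring R] [Fintype ι] [Fintype κ]
    (A : Matrix ι ι R) (B : Matrix κ κ R) (z : ι × κ → R) :
    z ⬝ᵥ ((A ⊗ₖ B) *ᵥ z) =
      ∑ p, ∑ q, A p q * ((fun i => z (p, i)) ⬝ᵥ (B *ᵥ fun j => z (q, j))) := by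
  simp only [dotProduct, mulVec, kroneckerMap_apply, Fintype.sum_prod_type, Finset.mul_sum]
  refine Finset.sum_congr rfl fun p _ => ?_
  rw [Finset.sum_comm]
  refine Finset.sum_congr rfl fun q _ => ?_
  refine Finset.sum_congr rfl fun i _ => Finset.sum_congr rfl fun j _ => ?_
  ring

section Spectral

variable {m : Type*} [Fintype m] [DecidableEq m] {A : Matrix m m ℝ}

theorem IsHermitian.dotProduct_mulVec_eq_sum_eigenvalues (hA : A.IsHermitian) (z : m → ℝ) :
    z ⬝ᵥ (A *ᵥ z)
      = ∑ j, hA.eigenvalues j * (star (hA.eigenvectorUnitary : Matrix m m ℝ) *ᵥ z) j ^ 2 := by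
  conv_lhs => rw [hA.spectral_theorem, Unitary.conjStarAlgAut_apply]
  rw [← mulVec_mulVec, ← mulVec_mulVec, dotProduct_mulVec, ← mulVec_transpose]
  simp [dotProduct, mulVec_diagonal, sq, star_eq_conjTranspose, mul_left_comm]

theorem IsHermitian.sum_sq_star_eigenvectorUnitary_mulVec (hA : A.IsHermitian) (z : m → ℝ) :
    ∑ j, (star (hA.eigenvectorUnitary : Matrix m m ℝ) *ᵥ z) j ^ 2 = ∑ j, z j ^ 2 := by
  set U : Matrix m m ℝ := ↑hA.eigenvectorUnitary
  have hU : U * star U = 1 := mem_unitaryGroup_iff.mp hA.eigenvectorUnitary.2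
  have hUt : (star U)ᵀ = U := by
    rw [star_eq_conjTranspose, conjTranspose_eq_transpose_of_trivial, transpose_transpose]
  have h : (star U *ᵥ z) ⬝ᵥ (star U *ᵥ z) = z ⬝ᵥ z := by
    rw [dotProduct_mulVec, vecMul_mulVec, ← mulVec_transpose, hUt, hU, transpose_one, one_mulVec]
  simpa [dotProduct, sq] using h

theorem IsHermitian.iInf_eigenvalues_mul_le (hA : A.IsHermitian) (z : m → ℝ) :
    (⨅ j, hA.eigenvalues j) * ∑ i, z i ^ 2 ≤ z ⬝ᵥ (A *ᵥ z) := by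
  rw [hA.dotProduct_mulVec_eq_sum_eigenvalues, ← hA.sum_sq_star_eigenvectorUnitary_mulVec,
    Finset.mul_sum]
  exact Finset.sum_le_sum fun j _ => mul_le_mul_of_nonneg_right
    (ciInf_le (Set.finite_range _).bddBelow j) (sq_nonneg _)

theorem IsHermitian.dotProduct_mulVec_le_iSup_eigenvalues_mul (hA : A.IsHermitian) (z : m → ℝ) :
    z ⬝ᵥ (A *ᵥ z) ≤ (⨆ j, hA.eigenvalues j) * ∑ i, z i ^ 2 := by
  rw [hA.dotProduct_mulVec_eq_sum_eigenvalues, ← hA.sum_sq_star_eigenvectorUnitary_mulVec,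
    Finset.mul_sum]
  exact Finset.sum_le_sum fun j _ => mul_le_mul_of_nonneg_right
    (le_ciSup (Set.finite_range _).bddAbove j) (sq_nonneg _)

theorem PosDef.sum_sq_le_of_dotProduct_mulVec_le (hA : A.PosDef) {x y : m → ℝ} {r : ℝ}
    (hr : 0 ≤ r) (h : x ⬝ᵥ (A *ᵥ x) ≤ r * (y ⬝ᵥ (A *ᵥ y))) :
    ∑ i, x i ^ 2 ≤ (⨆ j, hA.isHermitian.eigenvalues j) / (⨅ j, hA.isHermitian.eigenvalues j)
      * r * ∑ i, y i ^ 2 := by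
  cases isEmpty_or_nonempty m
  · simp
  obtain ⟨j, hj⟩ := exists_eq_ciInf_of_finite (f := hA.isHermitian.eigenvalues)
  have hmin : 0 < ⨅ j, hA.isHermitian.eigenvalues j := hj ▸ hA.eigenvalues_pos j
  rw [div_mul_eq_mul_div, div_mul_eq_mul_div, le_div_iff₀ hmin]
  calc (∑ i, x i ^ 2) * ⨅ j, hA.isHermitian.eigenvalues j
      ≤ x ⬝ᵥ (A *ᵥ x) := by rw [mul_comm]; exact hA.isHermitian.iInf_eigenvalues_mul_le x
    _ ≤ r * ((⨆ j, hA.isHermitian.eigenvalues j) * ∑ i, y i ^ 2) :=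
      h.trans (mul_le_mul_of_nonneg_left
        (hA.isHermitian.dotProduct_mulVec_le_iSup_eigenvalues_mul y) hr)
    _ = _ := by ring

end Spectral

end Matrix

namespace ConsensusLyapunov

section Mean

variable {n : ℕ}

noncomputable def mean (a : Fin n → ℝ) : ℝ := (∑ i, a i) / n

theorem sum_eq_mul_mean (a : Fin n → ℝ) : ∑ i, a i = n * mean a := by
  rcases Nat.eq_zero_or_pos n with rfl | hn
  · simp
  · rw [mean, mul_div_cancel₀ _ (by positivity)]

theorem sum_sub_mean (a : Fin n → ℝ) : ∑ i, (a i - mean a) = 0 := by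
  simp [Finset.sum_sub_distrib, sum_eq_mul_mean a]

theorem mean_sub (a b : Fin n → ℝ) : mean (a - b) = mean a - mean b := by
  simp [mean, Finset.sum_sub_distrib, sub_div]

theorem mean_add (a b : Fin n → ℝ) : mean (a + b) = mean a + mean b := by
  simp [mean, Finset.sum_add_distrib, add_div]

theorem mean_smul (c : ℝ) (a : Fin n → ℝ) : mean (c • a) = c * mean a := by
  simp [mean, ← Finset.mul_sum, mul_div_assoc]

theorem mean_sub_mean (a : Fin n → ℝ) : mean (fun i => a i - mean a) = 0 := by
  rw [mean, sum_sub_mean a, zero_div]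

theorem consensusProj_mulVec (a : Fin n → ℝ) : consensusProj n *ᵥ a = fun _ => mean a := by
  ext i
  simp [consensusProj, mulVec, dotProduct, mean, ← Finset.mul_sum, div_eq_inv_mul]

theorem one_sub_consensusProj_mulVec (a : Fin n → ℝ) :
    (1 - consensusProj n) *ᵥ a = fun i => a i - mean a := by
  rw [sub_mulVec, one_mulVec, consensusProj_mulVec]
  rfl

variable (n) in
theorem consensusProj_isHermitian : (consensusProj n).IsHermitian := by
  ext i j
  simp [consensusProj]

variable {L : Matrix (Fin n) (Fin n) ℝ}

theorem mean_mulVec_eq_zero (hL : onesVec n ᵥ* L = 0) (v : Fin n → ℝ) : mean (L *ᵥ v) = 0 := by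
  have : ∑ i, (L *ᵥ v) i = (onesVec n ᵥ* L) ⬝ᵥ v := by
    rw [← dotProduct_mulVec]
    simp [dotProduct, onesVec]
  simp [mean, this, hL]

theorem mulVec_sub_mean (hL : L *ᵥ onesVec n = 0) (v : Fin n → ℝ) :
    L *ᵥ (fun i => v i - mean v) = L *ᵥ v := by
  have : (fun i => v i - mean v) = v - mean v • onesVec n := by
    ext i
    simp [onesVec]
  rw [this, mulVec_sub, mulVec_smul, hL, smul_zero, sub_zero]

end Mean

section QuadForm

def quadForm (A : Matrix (Fin 2) (Fin 2) ℝ) (a b : ℝ) : ℝ := ![a, b] ⬝ᵥ (A *ᵥ ![a, b])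

def sectorMat (μ Lf : ℝ) : Matrix (Fin 2) (Fin 2) ℝ := !![-2 * μ * Lf, Lf + μ; Lf + μ, -2]

def graphMat (σ : ℝ) : Matrix (Fin 2) (Fin 2) ℝ := !![σ ^ 2 - 1, 1; 1, -1]

variable {A : Matrix (Fin 2) (Fin 2) ℝ}

variable (A) in
theorem quadForm_apply (a b : ℝ) :
    quadForm A a b = A 0 0 * a * a + A 0 1 * a * b + A 1 0 * b * a + A 1 1 * b * b := by
  simp only [quadForm, dotProduct, mulVec, Fin.sum_univ_two, cons_val_zero, cons_val_one,
    cons_val_fin_one]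
  ring

theorem quadForm_sectorMat (μ Lf x u : ℝ) :
    quadForm (sectorMat μ Lf) x u = -2 * μ * Lf * x ^ 2 + 2 * (Lf + μ) * x * u - 2 * u ^ 2 := by
  simp only [quadForm_apply, sectorMat, of_apply, cons_val', cons_val_zero, cons_val_one,
    cons_val_fin_one]
  ring

theorem quadForm_graphMat (σ y d : ℝ) :
    quadForm (graphMat σ) y d = σ ^ 2 * y ^ 2 - (y - d) ^ 2 := by
  simp only [quadForm_apply, graphMat, of_apply, cons_val', cons_val_zero, cons_val_one,
    cons_val_fin_one]
  ring

theorem quadForm_nonneg (hA : A.PosSemidef) (a b : ℝ) : 0 ≤ quadForm A a b := by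
  simpa only [quadForm, star_trivial] using hA.dotProduct_mulVec_nonneg ![a, b]

theorem quadForm_pos (hA : A.PosDef) {a b : ℝ} (hab : a ≠ 0 ∨ b ≠ 0) : 0 < quadForm A a b := by
  have hne : ![a, b] ≠ 0 := fun h => by
    have h0 := congrFun h 0
    have h1 := congrFun h 1
    simp_all
  simpa only [quadForm, star_trivial] using hA.dotProduct_mulVec_pos hne

variable (A) in
/-- The cross terms are linear in the deviations, which sum to zero. -/
theorem sum_quadForm_eq_mean_add_sum_dev {n : ℕ} (a b : Fin n → ℝ) :
    ∑ i, quadForm A (a i) (b i)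
      = n * quadForm A (mean a) (mean b) + ∑ i, quadForm A (a i - mean a) (b i - mean b) := by
  set ca := (A 0 0 + A 0 0) * mean a + (A 0 1 + A 1 0) * mean b
  set cb := (A 0 1 + A 1 0) * mean a + (A 1 1 + A 1 1) * mean b
  calc ∑ i, quadForm A (a i) (b i)
      = ∑ i, (quadForm A (mean a) (mean b) + quadForm A (a i - mean a) (b i - mean b)
          + (ca * (a i - mean a) + cb * (b i - mean b))) := by
        congr 1 with i
        simp only [quadForm_apply, ca, cb]
        ring
    _ = n * quadForm A (mean a) (mean b) + ∑ i, quadForm A (a i - mean a) (b i - mean b)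
          + (ca * ∑ i, (a i - mean a) + cb * ∑ i, (b i - mean b)) := by
        rw [Finset.sum_add_distrib, Finset.sum_add_distrib, Finset.sum_add_distrib,
          ← Finset.mul_sum, ← Finset.mul_sum, Finset.sum_const, Finset.card_univ,
          Fintype.card_fin, nsmul_eq_mul]
    _ = _ := by rw [sum_sub_mean, sum_sub_mean]; ring

end QuadForm

theorem sum_sq_mulVec_le_matSpectralNorm {n : ℕ} (M : Matrix (Fin n) (Fin n) ℝ) (z : Fin n → ℝ) :
    ∑ i, (M *ᵥ z) i ^ 2 ≤ matSpectralNorm M ^ 2 * ∑ i, z i ^ 2 := by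
  have hnorm (w : Fin n → ℝ) : ∑ i, w i ^ 2 = ‖WithLp.toLp 2 w‖ ^ 2 := by
    simp [EuclideanSpace.real_norm_sq_eq]
  rw [hnorm, hnorm, matSpectralNorm, ← mul_pow, ← toEuclideanCLM_toLp]
  exact pow_le_pow_left₀ (norm_nonneg _) (ContinuousLinearMap.le_opNorm _ _) 2

theorem sum_quadForm_graphMat_nonneg {n : ℕ} {L : Matrix (Fin n) (Fin n) ℝ}
    (hL : L *ᵥ onesVec n = 0) (y : Fin n → ℝ) :
    0 ≤ ∑ i, quadForm (graphMat (matSpectralNorm (1 - consensusProj n - L)))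
      (y i - mean y) ((L *ᵥ y) i) := by
  set y' : Fin n → ℝ := fun i => y i - mean y
  have hy' : (1 - consensusProj n - L) *ᵥ y' = fun i => y' i - (L *ᵥ y) i := by
    rw [sub_mulVec, one_sub_consensusProj_mulVec, mean_sub_mean, mulVec_sub_mean hL]
    ext i
    simp
  have h := sum_sq_mulVec_le_matSpectralNorm (1 - consensusProj n - L) y'
  rw [hy'] at h
  simp only [quadForm_graphMat, Finset.sum_sub_distrib, ← Finset.mul_sum]
  linarith

theorem eq_of_sector_of_sum_eq {n : ℕ} (hn : 0 < n) {μ Lf x_opt c : ℝ} (hμ : 0 < μ)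
    (hμL : μ ≤ Lf) {g : Fin n → ℝ → ℝ}
    (hsec : ∀ i, 0 ≤ quadForm (sectorMat μ Lf) (c - x_opt) (g i c - g i x_opt))
    (hsum : ∑ i, g i c = ∑ i, g i x_opt) : c = x_opt := by
  have h := Finset.sum_nonneg fun i (_ : i ∈ Finset.univ) => hsec i
  have hdiff : ∑ i, (g i c - g i x_opt) = 0 := by rw [Finset.sum_sub_distrib, hsum, sub_self]
  simp only [quadForm_sectorMat, Finset.sum_sub_distrib, Finset.sum_add_distrib,
    ← Finset.mul_sum, hdiff, Finset.sum_const, Finset.card_univ, Fintype.card_fin,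
    nsmul_eq_mul] at h
  have hsq : 0 ≤ ∑ i, (g i c - g i x_opt) ^ 2 := Finset.sum_nonneg fun i _ => sq_nonneg _
  have hcoef : 0 < (n : ℝ) * (μ * Lf) := by positivity [hμ.trans_le hμL]
  have hle : (c - x_opt) ^ 2 ≤ 0 := by nlinarith
  exact sub_eq_zero.mp (pow_eq_zero_iff two_ne_zero |>.mp (le_antisymm hle (sq_nonneg _)))

theorem fixedPoint_x_eq_opt {n : ℕ} (hn : 0 < n) {L : Matrix (Fin n) (Fin n) ℝ}
    (hL : onesVec n ᵥ* L = 0) {μ Lf x_opt α ζ : ℝ} (hμ : 0 < μ) (hμL : μ ≤ Lf) (hα : α ≠ 0)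
    {g : Fin n → ℝ → ℝ} (hopt : ∑ i, g i x_opt = 0)
    (hsec : ∀ i x, 0 ≤ quadForm (sectorMat μ Lf) (x - x_opt) (g i x - g i x_opt))
    {w1s w2s xs ys us vs : Fin n → ℝ}
    (hfix1 : w1s = w1s - α • us - ζ • vs)
    (hfix2 : w2s = (1 - consensusProj n) *ᵥ (w1s + w2s - vs))
    (hxs : xs = w1s - vs) (hus : us = fun i => g i (xs i)) (hvs : vs = L *ᵥ ys) :
    xs = fun _ => x_opt := by
  have hvs_mean : mean vs = 0 := hvs ▸ mean_mulVec_eq_zero hL ys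
  have hus_mean : mean us = 0 := by
    have h := congrArg mean hfix1
    rw [mean_sub, mean_sub, mean_smul, mean_smul, hvs_mean] at h
    exact (mul_eq_zero.mp (by linarith : α * mean us = 0)).resolve_left hα
  set c := mean (w1s + w2s - vs)
  have hxs_const : xs = fun _ => c := by
    ext i
    have h := congrFun hfix2 i
    rw [one_sub_consensusProj_mulVec] at h
    simp only [hxs, Pi.sub_apply, Pi.add_apply] at h ⊢
    linarith
  have hsum : ∑ i, g i c = ∑ i, g i x_opt := by
    have h := sum_eq_mul_mean us
    rw [hus_mean, mul_zero, hus, hxs_const] at h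
    rw [h, hopt]
  rw [hxs_const, eq_of_sector_of_sum_eq hn hμ hμL (fun i => hsec i c) hsum]

section Lyapunov

variable {n : ℕ} {P Q : Matrix (Fin 2) (Fin 2) ℝ}

variable (n P Q) in
noncomputable def lyapMatrix : Matrix (Fin 2 × Fin n) (Fin 2 × Fin n) ℝ :=
  P ⊗ₖ consensusProj n + Q ⊗ₖ (1 - consensusProj n)

variable (P Q) in
/-- `zᵀ (lyapMatrix n P Q) z` for `z = (a, b)`, in consensus/disagreement coordinates
(`dotProduct_lyapMatrix_mulVec`). -/
noncomputable def lyapunov (a b : Fin n → ℝ) : ℝ :=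
  n * quadForm P (mean a) (mean b) + ∑ i, quadForm Q (a i - mean a) (b i - mean b)

variable (P Q) in
theorem dotProduct_lyapMatrix_mulVec (z : Fin 2 × Fin n → ℝ) :
    z ⬝ᵥ (lyapMatrix n P Q *ᵥ z) = lyapunov P Q (fun i => z (0, i)) (fun i => z (1, i)) := by
  have hproj (a b : Fin n → ℝ) : a ⬝ᵥ (consensusProj n *ᵥ b) = n * mean a * mean b := by
    simp only [consensusProj_mulVec, dotProduct, ← Finset.sum_mul, sum_eq_mul_mean]
  have hdev := sum_quadForm_eq_mean_add_sum_dev Q (fun i => z (0, i)) (fun i => z (1, i))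
  rw [lyapunov, eq_sub_of_add_eq' hdev.symm, lyapMatrix, add_mulVec, dotProduct_add,
    dotProduct_kronecker_mulVec, dotProduct_kronecker_mulVec]
  simp only [sub_mulVec, one_mulVec, dotProduct_sub, hproj, Fin.sum_univ_two, quadForm_apply]
  simp only [dotProduct, Finset.sum_add_distrib, mul_assoc, ← Finset.mul_sum]
  ring

theorem lyapunov_pos (hn : 0 < n) (hP : P.PosDef) (hQ : Q.PosDef) {a b : Fin n → ℝ}
    (hab : a ≠ 0 ∨ b ≠ 0) : 0 < lyapunov P Q a b := by
  have hmean : 0 ≤ n * quadForm P (mean a) (mean b) :=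
    mul_nonneg n.cast_nonneg (quadForm_nonneg hP.posSemidef _ _)
  have hdev : 0 ≤ ∑ i, quadForm Q (a i - mean a) (b i - mean b) :=
    Finset.sum_nonneg fun i _ => quadForm_nonneg hQ.posSemidef _ _
  rw [lyapunov]
  by_cases hconst : ∀ i, a i = mean a ∧ b i = mean b
  · have hm : mean a ≠ 0 ∨ mean b ≠ 0 := by
      refine hab.imp (fun ha hm => ha ?_) (fun hb hm => hb ?_) <;>
        ext i <;> simp [(hconst i).1, (hconst i).2, hm]
    have := mul_pos (Nat.cast_pos.mpr hn) (quadForm_pos hP hm)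
    linarith
  · push Not at hconst
    obtain ⟨i, hi⟩ := hconst
    have hpos : 0 < ∑ i, quadForm Q (a i - mean a) (b i - mean b) := by
      refine Finset.sum_pos' (fun i _ => quadForm_nonneg hQ.posSemidef _ _)
        ⟨i, Finset.mem_univ _, quadForm_pos hQ ?_⟩
      by_contra! h
      exact hi (sub_eq_zero.mp h.1) (sub_eq_zero.mp h.2)
    linarith

theorem lyapMatrix_posDef (hn : 0 < n) (hP : P.PosDef) (hQ : Q.PosDef) :
    (lyapMatrix n P Q).PosDef := by
  have hherm : (lyapMatrix n P Q).IsHermitian := by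
    rw [IsHermitian, lyapMatrix, conjTranspose_add, conjTranspose_kronecker,
      conjTranspose_kronecker, hP.isHermitian.eq, hQ.isHermitian.eq,
      (consensusProj_isHermitian n).eq, (isHermitian_one.sub (consensusProj_isHermitian n)).eq]
  refine PosDef.of_dotProduct_mulVec_pos hherm fun z hz => ?_
  rw [star_trivial, dotProduct_lyapMatrix_mulVec]
  refine lyapunov_pos hn hP hQ ?_
  by_contra! h
  refine hz (funext fun ⟨p, i⟩ => ?_)
  fin_cases p
  · exact congrFun h.1 i
  · exact congrFun h.2 i

theorem lyapunov_update_eq {L : Matrix (Fin n) (Fin n) ℝ} (hL : onesVec n ᵥ* L = 0)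
    (α ζ : ℝ) (a b du y : Fin n → ℝ) :
    lyapunov P Q (a - α • du - ζ • L *ᵥ y) ((1 - consensusProj n) *ᵥ (a + b - L *ᵥ y))
      = n * quadForm P (mean a - α * mean du) 0
        + ∑ i, quadForm Q ((a i - mean a) - α * (du i - mean du) - ζ * (L *ᵥ y) i)
            ((a i - mean a) + (b i - mean b) - (L *ᵥ y) i) := by
  rw [lyapunov, one_sub_consensusProj_mulVec, mean_sub_mean]
  simp only [mean_sub, mean_add, mean_smul, mean_mulVec_eq_zero hL, Pi.sub_apply, Pi.add_apply,
    Pi.smul_apply, smul_eq_mul, mul_zero, sub_zero]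
  congr 1
  refine Finset.sum_congr rfl fun i _ => ?_
  congr 1 <;> ring

section LMI

variable {α ζ δ η ρ lam0 lam1 μ Lf σ : ℝ}

theorem quadForm_consensus_le
    (h : (-((Xp α)ᵀ * blkDiagRho P ρ * Xp α + lam0 • (Ypᵀ * M0mat μ Lf * Yp))).PosSemidef)
    (a b c : ℝ) :
    quadForm P (a - α * c) 0 + lam0 * quadForm (sectorMat μ Lf) a c
      ≤ ρ ^ 2 * quadForm P a b := by
  have := h.dotProduct_mulVec_nonneg (Sum.elim ![a, b] ![c])
  simp [Xp, Yp, blkDiagRho, M0mat, sectorMat, quadForm_apply, dotProduct, mulVec,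
    Matrix.mul_apply, Fintype.sum_sum_type, Fin.sum_univ_two] at this ⊢
  linarith

theorem quadForm_disagreement_le
    (h : (-((Xq α ζ)ᵀ * blkDiagRho Q ρ * Xq α ζ
          + lam0 • (Yqxᵀ * M0mat μ Lf * Yqx)
          + lam1 • ((Yqy δ η)ᵀ * M1mat σ * Yqy δ η))).PosSemidef)
    (a b c d : ℝ) :
    quadForm Q (a - α * c - ζ * d) (a + b - d) + lam0 * quadForm (sectorMat μ Lf) (a - d) c
      + lam1 * quadForm (graphMat σ) (δ * a + η * b) d ≤ ρ ^ 2 * quadForm Q a b := by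
  have := h.dotProduct_mulVec_nonneg (Sum.elim ![a, b] (Sum.elim ![c] ![d]))
  simp [Xq, Yqx, Yqy, blkDiagRho, M0mat, M1mat, sectorMat, graphMat, quadForm_apply, dotProduct,
    mulVec, Matrix.mul_apply, Fintype.sum_sum_type, Fin.sum_univ_two, Matrix.one_apply] at this ⊢
  linarith

theorem lyapunov_update_le {L : Matrix (Fin n) (Fin n) ℝ}
    (hL1 : L *ᵥ onesVec n = 0) (hL2 : onesVec n ᵥ* L = 0) (hlam0 : 0 ≤ lam0) (hlam1 : 0 ≤ lam1)
    (hLMI1 : (-((Xp α)ᵀ * blkDiagRho P ρ * Xp α + lam0 • (Ypᵀ * M0mat μ Lf * Yp))).PosSemidef)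
    (hLMI2 : (-((Xq α ζ)ᵀ * blkDiagRho Q ρ * Xq α ζ + lam0 • (Yqxᵀ * M0mat μ Lf * Yqx)
      + lam1 • ((Yqy δ η)ᵀ * M1mat (matSpectralNorm (1 - consensusProj n - L)) * Yqy δ η)))
        |>.PosSemidef)
    {a b du : Fin n → ℝ}
    (hsec : ∀ i, 0 ≤ quadForm (sectorMat μ Lf) (a i - (L *ᵥ (δ • a + η • b)) i) (du i)) :
    lyapunov P Q (a - α • du - ζ • L *ᵥ (δ • a + η • b))
        ((1 - consensusProj n) *ᵥ (a + b - L *ᵥ (δ • a + η • b)))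
      ≤ ρ ^ 2 * lyapunov P Q a b := by
  set dv := L *ᵥ (δ • a + η • b) with hdv
  have hdv_mean : mean dv = 0 := mean_mulVec_eq_zero hL2 _
  have hsector : 0 ≤ n * quadForm (sectorMat μ Lf) (mean a) (mean du)
      + ∑ i, quadForm (sectorMat μ Lf) ((a i - mean a) - dv i) (du i - mean du) := by
    have h := sum_quadForm_eq_mean_add_sum_dev (sectorMat μ Lf) (a - dv) du
    simp only [mean_sub, hdv_mean, sub_zero, Pi.sub_apply, sub_right_comm _ (dv _)] at h
    exact h ▸ Finset.sum_nonneg fun i _ => hsec i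
  have hgraph : 0 ≤ ∑ i, quadForm (graphMat (matSpectralNorm (1 - consensusProj n - L)))
      (δ * (a i - mean a) + η * (b i - mean b)) (dv i) := by
    have h := sum_quadForm_graphMat_nonneg hL1 (δ • a + η • b)
    simp only [← hdv, mean_add, mean_smul, Pi.add_apply, Pi.smul_apply, smul_eq_mul] at h
    convert h using 3 with i
    ring
  have hcons := quadForm_consensus_le hLMI1 (mean a) (mean b) (mean du)
  have hdis := Finset.sum_le_sum fun i (_ : i ∈ Finset.univ) =>
    quadForm_disagreement_le hLMI2 (a i - mean a) (b i - mean b) (du i - mean du) (dv i)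
  simp only [Finset.sum_add_distrib, ← Finset.mul_sum] at hdis
  rw [lyapunov_update_eq hL2, lyapunov]
  linarith [mul_nonneg hlam0 hsector, mul_nonneg hlam1 hgraph,
    mul_le_mul_of_nonneg_left hcons n.cast_nonneg]

theorem lyapunov_error_succ_le {L : Matrix (Fin n) (Fin n) ℝ}
    (hL1 : L *ᵥ onesVec n = 0) (hL2 : onesVec n ᵥ* L = 0) (hlam0 : 0 ≤ lam0) (hlam1 : 0 ≤ lam1)
    (hLMI1 : (-((Xp α)ᵀ * blkDiagRho P ρ * Xp α + lam0 • (Ypᵀ * M0mat μ Lf * Yp))).PosSemidef)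
    (hLMI2 : (-((Xq α ζ)ᵀ * blkDiagRho Q ρ * Xq α ζ + lam0 • (Yqxᵀ * M0mat μ Lf * Yqx)
      + lam1 • ((Yqy δ η)ᵀ * M1mat (matSpectralNorm (1 - consensusProj n - L)) * Yqy δ η)))
        |>.PosSemidef)
    {x_opt : ℝ} {g : Fin n → ℝ → ℝ}
    (hsec : ∀ i x, 0 ≤ quadForm (sectorMat μ Lf) (x - x_opt) (g i x - g i x_opt))
    {w1s w2s xs ys us vs : Fin n → ℝ} (hxs_opt : xs = fun _ => x_opt)
    (hfix1 : w1s = w1s - α • us - ζ • vs)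
    (hfix2 : w2s = (1 - consensusProj n) *ᵥ (w1s + w2s - vs))
    (hfix3 : xs = w1s - vs) (hfix4 : ys = δ • w1s + η • w2s)
    (hfix5 : us = fun i => g i (xs i)) (hfix6 : vs = L *ᵥ ys)
    {w1 w2 y v x u w1' w2' : Fin n → ℝ}
    (hy : y = δ • w1 + η • w2) (hv : v = L *ᵥ y) (hx : x = w1 - v)
    (hu : u = fun i => g i (x i)) (hw1 : w1' = w1 - α • u - ζ • v)
    (hw2 : w2' = (1 - consensusProj n) *ᵥ (w1 + w2 - v)) :
    lyapunov P Q (w1' - w1s) (w2' - w2s) ≤ ρ ^ 2 * lyapunov P Q (w1 - w1s) (w2 - w2s) := by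
  have hdv : v - vs = L *ᵥ (δ • (w1 - w1s) + η • (w2 - w2s)) := by
    rw [hv, hfix6, ← mulVec_sub, hy, hfix4]
    congr 1
    module
  have hsec_err (i : Fin n) :
      0 ≤ quadForm (sectorMat μ Lf) ((w1 - w1s) i - (v - vs) i) ((u - us) i) := by
    convert hsec i (x i) using 2
    · rw [hx, ← congrFun hxs_opt i, hfix3]
      simp only [Pi.sub_apply]
      ring
    · rw [hu, hfix5, hxs_opt]
      rfl
  rw [hdv] at hsec_err
  convert lyapunov_update_le hL1 hL2 hlam0 hlam1 hLMI1 hLMI2 hsec_err using 2 <;> rw [← hdv]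
  · rw [hw1]
    conv_lhs => rw [hfix1]
    module
  · rw [hw2]
    conv_lhs => rw [hfix2]
    rw [← mulVec_sub]
    congr 1
    abel

end LMI

end Lyapunov

end ConsensusLyapunov

open ConsensusLyapunov in
theorem lmi_implies_linear_convergence_general {n : ℕ} (hn : 1 ≤ n)
    (L : Matrix (Fin n) (Fin n) ℝ)
    (hL1 : L *ᵥ onesVec n = 0) (hL2 : onesVec n ᵥ* L = 0)
    (σ : ℝ) (hσ : σ = matSpectralNorm (1 - consensusProj n - L))
    (μ Lf x_opt : ℝ) (hμ : 0 < μ) (hμL : μ ≤ Lf)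
    (g : Fin n → ℝ → ℝ)
    (hopt : ∑ i, g i x_opt = 0)
    (hsec : ∀ i : Fin n, ∀ x : ℝ,
      -2 * μ * Lf * (x - x_opt) ^ 2
        + 2 * (Lf + μ) * (x - x_opt) * (g i x - g i x_opt)
        - 2 * (g i x - g i x_opt) ^ 2 ≥ 0)
    (α ζ δ η : ℝ) (hα : α ≠ 0)
    -- LMI data
    (P Q : Matrix (Fin 2) (Fin 2) ℝ) (hP : P.PosDef) (hQ : Q.PosDef)
    (lam0 lam1 : ℝ) (hlam0 : 0 ≤ lam0) (hlam1 : 0 ≤ lam1)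
    (ρ : ℝ)
    -- LMI (i): consensus direction
    (hLMI1 :
      (-((Xp α)ᵀ * blkDiagRho P ρ * Xp α
          + lam0 • (Ypᵀ * M0mat μ Lf * Yp))).PosSemidef)
    -- LMI (ii): disagreement direction
    (hLMI2 :
      (-((Xq α ζ)ᵀ * blkDiagRho Q ρ * Xq α ζ
          + lam0 • (Yqxᵀ * M0mat μ Lf * Yqx)
          + lam1 • ((Yqy δ η)ᵀ * M1mat σ * Yqy δ η))).PosSemidef)
    -- fixed point of G_m
    (w1s w2s xs ys us vs : Fin n → ℝ)
    (hfix1 : w1s = w1s - α • us - ζ • vs)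
    (hfix2 : w2s = (1 - consensusProj n) *ᵥ (w1s + w2s - vs))
    (hfix3 : xs = w1s - vs)
    (hfix4 : ys = δ • w1s + η • w2s)
    (hfix5 : us = fun i => g i (xs i))
    (hfix6 : vs = L *ᵥ ys)
    -- trajectory of G_m
    (w1 w2 y v x u : ℕ → Fin n → ℝ)
    (htr1 : ∀ k, y k = δ • w1 k + η • w2 k)
    (htr2 : ∀ k, v k = L *ᵥ y k)
    (htr3 : ∀ k, x k = w1 k - v k)
    (htr4 : ∀ k, u k = fun i => g i (x k i))
    (htr5 : ∀ k, w1 (k + 1) = w1 k - α • u k - ζ • v k)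
    (htr6 : ∀ k, w2 (k + 1) = (1 - consensusProj n) *ᵥ (w1 k + w2 k - v k)) :
    ∀ T : Matrix (Fin 2 × Fin n) (Fin 2 × Fin n) ℝ,
      T = P ⊗ₖ consensusProj n + Q ⊗ₖ (1 - consensusProj n) →
      ∀ (hT : T.IsHermitian) (k : ℕ),
        (∑ i, (w1 k i - w1s i) ^ 2) + (∑ i, (w2 k i - w2s i) ^ 2) ≤
          ((⨆ j, hT.eigenvalues j) / (⨅ j, hT.eigenvalues j)) * ρ ^ (2 * k) *
            ((∑ i, (w1 0 i - w1s i) ^ 2) + (∑ i, (w2 0 i - w2s i) ^ 2)) := by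
  intro T hT _ k
  subst hσ hT
  have hsec' (i : Fin n) (x : ℝ) :
      0 ≤ quadForm (sectorMat μ Lf) (x - x_opt) (g i x - g i x_opt) :=
    (quadForm_sectorMat ..).symm ▸ hsec i x
  have hxs := fixedPoint_x_eq_opt hn hL2 hμ hμL hα hopt hsec' hfix1 hfix2 hfix3 hfix5 hfix6
  have hdecay := le_geom (u := fun j => lyapunov P Q (w1 j - w1s) (w2 j - w2s)) (sq_nonneg ρ) k
    fun j _ => lyapunov_error_succ_le hL1 hL2 hlam0 hlam1 hLMI1 hLMI2 hsec' hxs hfix1 hfix2 hfix3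
      hfix4 hfix5 hfix6 (htr1 j) (htr2 j) (htr3 j) (htr4 j) (htr5 j) (htr6 j)
  set z : ℕ → Fin 2 × Fin n → ℝ := fun j p => ![w1 j - w1s, w2 j - w2s] p.1 p.2
  have hnorm (j : ℕ) :
      ∑ p, z j p ^ 2 = (∑ i, (w1 j i - w1s i) ^ 2) + (∑ i, (w2 j i - w2s i) ^ 2) := by
    simp [z, Fintype.sum_prod_type, Fin.sum_univ_two]
  have h := (lyapMatrix_posDef hn hP hQ).sum_sq_le_of_dotProduct_mulVec_le
    (pow_nonneg (sq_nonneg ρ) k) (x := z k) (y := z 0)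
    (by rwa [dotProduct_lyapMatrix_mulVec, dotProduct_lyapMatrix_mulVec])
  rwa [hnorm, hnorm, ← pow_mul] at h

/-- Theorem 2: feasibility of the two LMIs certifies linear
convergence of the projected dynamics `G_m` with rate `ρ` and constant `cond(T)`,
`T = P ⊗ Π + Q ⊗ (I − Π)`. -/
theorem lmi_implies_linear_convergence {n : ℕ} (hn : 1 ≤ n)
    (L : Matrix (Fin n) (Fin n) ℝ)
    (hL1 : L *ᵥ onesVec n = 0) (hL2 : onesVec n ᵥ* L = 0)
    (hker : ∀ v : Fin n → ℝ, L *ᵥ v = 0 ↔ ∃ c : ℝ, v = fun _ => c)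
    (σ : ℝ) (hσ : σ = matSpectralNorm (1 - consensusProj n - L)) (hσ1 : σ < 1)
    (μ Lf x_opt : ℝ) (hμ : 0 < μ) (hμL : μ ≤ Lf)
    (g : Fin n → ℝ → ℝ)
    (hopt : ∑ i, g i x_opt = 0)
    (hsec : ∀ i : Fin n, ∀ x : ℝ,
      -2 * μ * Lf * (x - x_opt) ^ 2
        + 2 * (Lf + μ) * (x - x_opt) * (g i x - g i x_opt)
        - 2 * (g i x - g i x_opt) ^ 2 ≥ 0)
    (α ζ δ η : ℝ) (hα : α ≠ 0) (hζ : ζ ≠ 0) (hη : η ≠ 0)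
    -- LMI data
    (P Q : Matrix (Fin 2) (Fin 2) ℝ) (hP : P.PosDef) (hQ : Q.PosDef)
    (lam0 lam1 : ℝ) (hlam0 : 0 ≤ lam0) (hlam1 : 0 ≤ lam1)
    (ρ : ℝ) (hρ0 : 0 < ρ) (hρ1 : ρ < 1)
    -- LMI (i): consensus direction
    (hLMI1 :
      (-((Xp α)ᵀ * blkDiagRho P ρ * Xp α
          + lam0 • (Ypᵀ * M0mat μ Lf * Yp))).PosSemidef)
    -- LMI (ii): disagreement direction
    (hLMI2 :
      (-((Xq α ζ)ᵀ * blkDiagRho Q ρ * Xq α ζ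
          + lam0 • (Yqxᵀ * M0mat μ Lf * Yqx)
          + lam1 • ((Yqy δ η)ᵀ * M1mat σ * Yqy δ η))).PosSemidef)
    -- fixed point of G_m
    (w1s w2s xs ys us vs : Fin n → ℝ)
    (hfix1 : w1s = w1s - α • us - ζ • vs)
    (hfix2 : w2s = (1 - consensusProj n) *ᵥ (w1s + w2s - vs))
    (hfix3 : xs = w1s - vs)
    (hfix4 : ys = δ • w1s + η • w2s)
    (hfix5 : us = fun i => g i (xs i))
    (hfix6 : vs = L *ᵥ ys)
    -- trajectory of G_m
    (w1 w2 y v x u : ℕ → Fin n → ℝ)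
    (htr1 : ∀ k, y k = δ • w1 k + η • w2 k)
    (htr2 : ∀ k, v k = L *ᵥ y k)
    (htr3 : ∀ k, x k = w1 k - v k)
    (htr4 : ∀ k, u k = fun i => g i (x k i))
    (htr5 : ∀ k, w1 (k + 1) = w1 k - α • u k - ζ • v k)
    (htr6 : ∀ k, w2 (k + 1) = (1 - consensusProj n) *ᵥ (w1 k + w2 k - v k)) :
    ∀ T : Matrix (Fin 2 × Fin n) (Fin 2 × Fin n) ℝ,
      T = P ⊗ₖ consensusProj n + Q ⊗ₖ (1 - consensusProj n) →
      ∀ (hT : T.IsHermitian) (k : ℕ),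
        (∑ i, (w1 k i - w1s i) ^ 2) + (∑ i, (w2 k i - w2s i) ^ 2) ≤
          ((⨆ j, hT.eigenvalues j) / (⨅ j, hT.eigenvalues j)) * ρ ^ (2 * k) *
            ((∑ i, (w1 0 i - w1s i) ^ 2) + (∑ i, (w2 0 i - w2s i) ^ 2)) :=
  lmi_implies_linear_convergence_general hn L hL1 hL2 σ hσ μ Lf x_opt hμ hμL g hopt hsec α ζ δ η hα
    P Q hP hQ lam0 lam1 hlam0 hlam1 ρ hLMI1 hLMI2 w1s w2s xs ys us vs hfix1 hfix2 hfix3 hfix4 hfix5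
    hfix6 w1 w2 y v x u htr1 htr2 htr3 htr4 htr5 htr6
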